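/- Let ζ ∈ ℝ with m_k ≠ −ζ and m̄_k ≠ ζ for all k, assume 1 + A·Ā is invertible, and assume E_{ζζ} ≠ 0. Then 1 + A·H_ζ·Ā·H̄_ζ is invertible and (1 + A·H_ζ·Ā·H̄_ζ)⁻¹ = G − (2ζ/E_{ζζ})·G·|γ̄_ζ⟩⟨b_ζ|·G. -/

import Mathlib

/-!
The Sylvester equation `M Ā - Ā M̄ = |ᾱ⟩⟨ā|` gives
`(M - ζ) Ā (M̄ + ζ) = (M + ζ) Ā (M̄ - ζ) + 2ζ |ᾱ⟩⟨ā|`, and since `M - ζ` commutes with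
`(M + ζ)⁻¹` this says that the Cayley transforms conjugate `Ā` into a rank-one perturbation of
itself: `H_ζ Ā H̄_ζ = Ā + 2ζ |β̄_ζ⟩⟨b_ζ|`. Hence `1 + A H_ζ Ā H̄_ζ = G⁻¹ + 2ζ |γ̄_ζ⟩⟨b_ζ|`, and the
Sherman–Morrison formula inverts it, `E_{ζζ}` being exactly its denominator.
-/

open Matrix

noncomputable section

/-- `H_ζ = (M - ζ)(M + ζ)⁻¹` for `M = diag(m)`. -/
def Hmat {N : ℕ} (m : Fin N → ℝ) (ζ : ℝ) : Matrix (Fin N) (Fin N) ℝ :=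
  (Matrix.diagonal m - ζ • 1) * (Matrix.diagonal m + ζ • 1)⁻¹

/-- `H̄_ζ = (M̄ + ζ)(M̄ - ζ)⁻¹` for `M̄ = diag(m̄)`. -/
def Hbmat {N : ℕ} (mb : Fin N → ℝ) (ζ : ℝ) : Matrix (Fin N) (Fin N) ℝ :=
  (Matrix.diagonal mb + ζ • 1) * (Matrix.diagonal mb - ζ • 1)⁻¹

/-- The row `⟨b_ξ| = ⟨ā|(M̄ - ξ)⁻¹`. -/
def rowB {N : ℕ} (mb ab : Fin N → ℝ) (ξ : ℝ) : Fin N → ℝ :=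
  Matrix.vecMul ab (Matrix.diagonal mb - ξ • 1)⁻¹

/-- The column `|β̄_η⟩ = (M + η)⁻¹|ᾱ⟩`. -/
def colBb {N : ℕ} (m αb : Fin N → ℝ) (η : ℝ) : Fin N → ℝ :=
  Matrix.mulVec (Matrix.diagonal m + η • 1)⁻¹ αb

/-- The scalar `E_{ξη} = 1 + (ξ+η)·⟨b_ξ|·G·A·|β̄_η⟩` with `G = (1 + A·Ā)⁻¹`. -/
def Efun {N : ℕ} (m mb αb ab : Fin N → ℝ) (A Ab : Matrix (Fin N) (Fin N) ℝ)
    (ξ η : ℝ) : ℝ :=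
  1 + (ξ + η) *
    (rowB mb ab ξ ⬝ᵥ
      Matrix.mulVec (((1 : Matrix (Fin N) (Fin N) ℝ) + A * Ab)⁻¹ * A) (colBb m αb η))

namespace Matrix

variable {n p R K : Type*} [Fintype n] [DecidableEq n] [Fintype p] [DecidableEq p]

section CommRing

variable [CommRing R]

theorem commute_nonsing_inv_right {A B : Matrix n n R} (h : Commute A B) : Commute A B⁻¹ := by
  by_cases hB : IsUnit B.det
  · calc A * B⁻¹ = B⁻¹ * (B * A) * B⁻¹ := by rw [nonsing_inv_mul_cancel_left _ _ hB]
      _ = B⁻¹ * A := by rw [← h.eq, ← Matrix.mul_assoc, mul_nonsing_inv_cancel_right _ _ hB]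
  · simp [nonsing_inv_apply_not_isUnit _ hB]

theorem sub_smul_one_mul_add_smul_one_of_sylvester {M : Matrix n n R} {M' : Matrix p p R}
    {X : Matrix n p R} {α : n → R} {a : p → R} (h : M * X - X * M' = vecMulVec α a) (ζ : R) :
    (M - ζ • 1) * X * (M' + ζ • 1) = (M + ζ • 1) * X * (M' - ζ • 1) + (2 * ζ) • vecMulVec α a := by
  rw [← h]
  simp only [Matrix.sub_mul, Matrix.mul_sub, Matrix.add_mul, Matrix.mul_add, Matrix.smul_mul,
    Matrix.mul_smul, Matrix.one_mul, Matrix.mul_one]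
  module

theorem cayley_mul_mul_cayley_of_sylvester {M : Matrix n n R} {M' : Matrix p p R}
    {X : Matrix n p R} {α : n → R} {a : p → R} (h : M * X - X * M' = vecMulVec α a) {ζ : R}
    (hM : IsUnit (M + ζ • 1)) (hM' : IsUnit (M' - ζ • 1)) :
    (M - ζ • 1) * (M + ζ • 1)⁻¹ * X * ((M' + ζ • 1) * (M' - ζ • 1)⁻¹) =
      X + (2 * ζ) • vecMulVec ((M + ζ • 1)⁻¹ *ᵥ α) (a ᵥ* (M' - ζ • 1)⁻¹) := by
  rw [isUnit_iff_isUnit_det] at hM hM'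
  have hζ (Y : Matrix n n R) : Commute (ζ • 1) Y := (Commute.one_left Y).smul_left ζ
  have hcomm : Commute (M - ζ • 1) (M + ζ • 1)⁻¹ :=
    commute_nonsing_inv_right (((Commute.refl M).add_right (hζ M).symm).sub_left (hζ _))
  calc (M - ζ • 1) * (M + ζ • 1)⁻¹ * X * ((M' + ζ • 1) * (M' - ζ • 1)⁻¹)
      = (M + ζ • 1)⁻¹ * ((M - ζ • 1) * X * (M' + ζ • 1)) * (M' - ζ • 1)⁻¹ := by
        simp only [hcomm.eq, Matrix.mul_assoc]
    _ = (M + ζ • 1)⁻¹ * ((M + ζ • 1) * X * (M' - ζ • 1) + (2 * ζ) • vecMulVec α a) *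
          (M' - ζ • 1)⁻¹ := by
        rw [sub_smul_one_mul_add_smul_one_of_sylvester h]
    _ = X + (2 * ζ) • vecMulVec ((M + ζ • 1)⁻¹ *ᵥ α) (a ᵥ* (M' - ζ • 1)⁻¹) := by
        rw [Matrix.mul_add, Matrix.add_mul, Matrix.mul_assoc (M + ζ • 1),
          nonsing_inv_mul_cancel_left _ _ hM, mul_nonsing_inv_cancel_right _ _ hM',
          Matrix.mul_smul, Matrix.smul_mul, mul_vecMulVec, vecMulVec_mul]

end CommRing

section Field

variable [Field K]

theorem add_smul_vecMulVec_mul_eq_one {B : Matrix n n K} (hB : IsUnit B) {s : K} {u v : n → K}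
    (h : 1 + s * (v ⬝ᵥ B⁻¹ *ᵥ u) ≠ 0) :
    (B + s • vecMulVec u v) *
      (B⁻¹ - (s / (1 + s * (v ⬝ᵥ B⁻¹ *ᵥ u))) • (B⁻¹ * vecMulVec u v * B⁻¹)) = 1 := by
  rw [isUnit_iff_isUnit_det] at hB
  set t := v ⬝ᵥ B⁻¹ *ᵥ u
  set U := vecMulVec u v
  have hUBU : U * B⁻¹ * U = t • U := by
    rw [vecMulVec_mul, vecMulVec_mul_vecMulVec, ← dotProduct_mulVec, vecMulVec_smul]
  have hc : s / (1 + s * t) * (1 + s * t) = s := div_mul_cancel₀ s h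
  calc (B + s • U) * (B⁻¹ - (s / (1 + s * t)) • (B⁻¹ * U * B⁻¹))
      = 1 + (s - s / (1 + s * t) * (1 + s * t)) • (U * B⁻¹) := by
        simp only [add_mul, mul_sub, smul_mul_assoc, mul_smul_comm, ← mul_assoc,
          mul_nonsing_inv _ hB, one_mul, hUBU, smul_smul]
        module
    _ = 1 := by rw [hc, sub_self, zero_smul, add_zero]

theorem isUnit_add_smul_vecMulVec_and_inv_eq {B : Matrix n n K} (hB : IsUnit B) {s : K}
    {u v : n → K} (h : 1 + s * (v ⬝ᵥ B⁻¹ *ᵥ u) ≠ 0) :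
    IsUnit (B + s • vecMulVec u v) ∧ (B + s • vecMulVec u v)⁻¹ =
      B⁻¹ - (s / (1 + s * (v ⬝ᵥ B⁻¹ *ᵥ u))) • (B⁻¹ * vecMulVec u v * B⁻¹) :=
  ⟨IsUnit.of_mul_eq_one _ (add_smul_vecMulVec_mul_eq_one hB h),
    inv_eq_right_inv (add_smul_vecMulVec_mul_eq_one hB h)⟩

end Field

end Matrix

theorem shifted_G_inverse_formula_general
    {N : ℕ} (m mb : Fin N → ℝ)
    (αb ab : Fin N → ℝ)
    (A Ab : Matrix (Fin N) (Fin N) ℝ)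
    (hAb : Matrix.diagonal m * Ab - Ab * Matrix.diagonal mb = Matrix.vecMulVec αb ab)
    (ζ : ℝ) (hm : ∀ k, m k ≠ -ζ) (hmb : ∀ k, mb k ≠ ζ)
    (hG : IsUnit ((1 : Matrix (Fin N) (Fin N) ℝ) + A * Ab))
    (hE : Efun m mb αb ab A Ab ζ ζ ≠ 0) :
    IsUnit ((1 : Matrix (Fin N) (Fin N) ℝ) + A * Hmat m ζ * Ab * Hbmat mb ζ) ∧
    ((1 : Matrix (Fin N) (Fin N) ℝ) + A * Hmat m ζ * Ab * Hbmat mb ζ)⁻¹ =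
      ((1 : Matrix (Fin N) (Fin N) ℝ) + A * Ab)⁻¹ -
        (2 * ζ / Efun m mb αb ab A Ab ζ ζ) •
          (((1 : Matrix (Fin N) (Fin N) ℝ) + A * Ab)⁻¹ *
            Matrix.vecMulVec (Matrix.mulVec A (colBb m αb ζ)) (rowB mb ab ζ) *
            ((1 : Matrix (Fin N) (Fin N) ℝ) + A * Ab)⁻¹) := by
  have hM : IsUnit (diagonal m + ζ • 1) := by
    rw [smul_one_eq_diagonal, diagonal_add, isUnit_diagonal, Pi.isUnit_iff]
    exact fun k => isUnit_iff_ne_zero.mpr fun h => hm k (eq_neg_of_add_eq_zero_left h)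
  have hM' : IsUnit (diagonal mb - ζ • 1) := by
    rw [smul_one_eq_diagonal, diagonal_sub, isUnit_diagonal, Pi.isUnit_iff]
    exact fun k => isUnit_iff_ne_zero.mpr fun h => hmb k (sub_eq_zero.mp h)
  have hrank_one : 1 + A * Hmat m ζ * Ab * Hbmat mb ζ =
      (1 + A * Ab) + (2 * ζ) • vecMulVec (A *ᵥ colBb m αb ζ) (rowB mb ab ζ) := by
    rw [mul_assoc, mul_assoc, ← mul_assoc (Hmat m ζ), Hmat, Hbmat,
      cayley_mul_mul_cayley_of_sylvester hAb hM hM', mul_add, mul_smul_comm, mul_vecMulVec,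
      add_assoc, colBb, rowB]
  have hEfun : Efun m mb αb ab A Ab ζ ζ =
      1 + 2 * ζ * (rowB mb ab ζ ⬝ᵥ (1 + A * Ab)⁻¹ *ᵥ (A *ᵥ colBb m αb ζ)) := by
    rw [Efun, mulVec_mulVec, two_mul]
  rw [hrank_one, hEfun]
  exact isUnit_add_smul_vecMulVec_and_inv_eq hG (hEfun ▸ hE)

theorem shifted_G_inverse_formula
    {N : ℕ} (hN : 1 ≤ N) (m mb : Fin N → ℝ)
    (αv αb av ab : Fin N → ℝ)
    (A Ab : Matrix (Fin N) (Fin N) ℝ)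
    (hA : Matrix.diagonal mb * A - A * Matrix.diagonal m = Matrix.vecMulVec αv av)
    (hAb : Matrix.diagonal m * Ab - Ab * Matrix.diagonal mb = Matrix.vecMulVec αb ab)
    (ζ : ℝ) (hm : ∀ k, m k ≠ -ζ) (hmb : ∀ k, mb k ≠ ζ)
    (hG : IsUnit ((1 : Matrix (Fin N) (Fin N) ℝ) + A * Ab))
    (hE : Efun m mb αb ab A Ab ζ ζ ≠ 0) :
    IsUnit ((1 : Matrix (Fin N) (Fin N) ℝ) + A * Hmat m ζ * Ab * Hbmat mb ζ) ∧
    ((1 : Matrix (Fin N) (Fin N) ℝ) + A * Hmat m ζ * Ab * Hbmat mb ζ)⁻¹ =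
      ((1 : Matrix (Fin N) (Fin N) ℝ) + A * Ab)⁻¹ -
        (2 * ζ / Efun m mb αb ab A Ab ζ ζ) •
          (((1 : Matrix (Fin N) (Fin N) ℝ) + A * Ab)⁻¹ *
            Matrix.vecMulVec (Matrix.mulVec A (colBb m αb ζ)) (rowB mb ab ζ) *
            ((1 : Matrix (Fin N) (Fin N) ℝ) + A * Ab)⁻¹) :=
  shifted_G_inverse_formula_general m mb αb ab A Ab hAb ζ hm hmb hG hE
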